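/- arXiv:2205.09090 — 2 statements merged into one kernel-verified Lean document; each statement's English description precedes it below -/
import Mathlib

section
/- For n ≥ 3 and 1 ≤ a ≤ ⌊n/2⌋, the counts of Kostant involutions satisfy the recursion ki_n^a = ki_{n−1}^a + ki_{n−2}^{a−1}, where ki_m^b denotes the number of Kostant involutions in S_m whose cycle decomposition contains exactly b transpositions (i.e., exactly 2b non-fixed points). -/
/-- The special involution `σ_{i,j}` of `S_n`: the permutation of `{1,…,n}` that swaps
`k` and `k+j+1` for every `k` with `i-j ≤ k ≤ i` (these transpositions are pairwise
disjoint, hence commute) and fixes all other points. -/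
def sigmaPerm (i j : ℕ) : Equiv.Perm ℕ :=
  ((List.range (j + 1)).map (fun t => Equiv.swap (i - j + t) (i + t + 1))).prod

/-- The parameter constraints `1 ≤ i ≤ n-1` and `0 ≤ j ≤ min(i-1, n-1-i)` for a special
involution `σ_{i,j}` of `S_n`. -/
def SpecialParams (n i j : ℕ) : Prop :=
  1 ≤ i ∧ i ≤ n - 1 ∧ j ≤ min (i - 1) (n - 1 - i)

/-- The extended support `{i-j-1, i-j, …, i+j+2}` of `σ_{i,j}`. -/
def extSupport (i j : ℕ) : Finset ℕ := Finset.Icc (i - j - 1) (i + j + 2)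

/-- Two special involutions (given by their parameters) are distant if their extended
supports have at most one common element. -/
def Distant (p q : ℕ × ℕ) : Prop :=
  (extSupport p.1 p.2 ∩ extSupport q.1 q.2).card ≤ 1

/-- A Kostant involution in `S_n`: a product of pairwise distant special involutions
(the identity being the empty product). -/
def IsKostant (n : ℕ) (w : Equiv.Perm ℕ) : Prop :=
  ∃ L : List (ℕ × ℕ),
    (∀ p ∈ L, SpecialParams n p.1 p.2) ∧
    L.Pairwise Distant ∧
    w = (L.map (fun p => sigmaPerm p.1 p.2)).prod

/-- `ki n a` is the number of Kostant involutions in `S_n` whose cycle decomposition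
contains exactly `a` transpositions, i.e. with exactly `2a` non-fixed points. -/
noncomputable def ki (n a : ℕ) : ℕ :=
  Set.ncard {w : Equiv.Perm ℕ | IsKostant n w ∧ Set.ncard {k : ℕ | w k ≠ k} = 2 * a}


/-!
A Kostant involution of `S_n` that fixes `n` is the same thing as a Kostant involution of
`S_{n-1}`. One that moves `n` has a unique block ending at `n`, of width `2(j+1)` say, and what
remains is a Kostant involution living strictly below that block. Shrinking the top block to width
`2j` (deleting it when `j = 0`) gives a Kostant involution of `S_{n-2}` with one transposition fewer,
and every such involution arises exactly once: both sides are parametrised by the same pairs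
`(j, x)`, and `j` can be read off from the value at the top point.
-/

open Equiv

lemma sigmaPerm_prefix_apply {i j : ℕ} (hij : j < i) :
    ∀ m ≤ j + 1, ∀ k : ℕ,
      ((List.range m).map fun t => swap (i - j + t) (i + t + 1)).prod k =
        if i - j ≤ k ∧ k < i - j + m then k + (j + 1)
        else if i + 1 ≤ k ∧ k ≤ i + m then k - (j + 1) else k := by
  intro m
  induction m with
  | zero =>
    intro _ k
    simp only [List.range_zero, List.map_nil, List.prod_nil, Perm.one_apply]
    split_ifs <;> omega
  | succ m ih =>
    intro hm k
    rw [List.range_succ, List.map_append, List.prod_append, List.map_singleton,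
      List.prod_singleton, Perm.mul_apply]
    rcases eq_or_ne k (i - j + m) with rfl | h1
    · rw [swap_apply_left, ih (by omega)]
      split_ifs <;> omega
    rcases eq_or_ne k (i + m + 1) with rfl | h2
    · rw [swap_apply_right, ih (by omega)]
      split_ifs <;> omega
    · rw [swap_apply_of_ne_of_ne h1 h2, ih (by omega)]
      split_ifs <;> omega

lemma sigmaPerm_apply {i j : ℕ} (hij : j < i) (k : ℕ) :
    sigmaPerm i j k =
      if i - j ≤ k ∧ k ≤ i then k + (j + 1)
      else if i + 1 ≤ k ∧ k ≤ i + j + 1 then k - (j + 1) else k := by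
  rw [sigmaPerm, sigmaPerm_prefix_apply hij (j + 1) le_rfl]
  split_ifs <;> omega

lemma sigmaPerm_apply_eq_self_iff {i j k : ℕ} (hij : j < i) :
    sigmaPerm i j k = k ↔ k < i - j ∨ i + j + 1 < k := by
  rw [sigmaPerm_apply hij]
  split_ifs <;> omega

lemma specialParams_iff {n i j : ℕ} : SpecialParams n i j ↔ j < i ∧ i + j < n := by
  unfold SpecialParams
  omega

lemma distant_iff {p q : ℕ × ℕ} :
    Distant p q ↔ p.1 + p.2 + 3 ≤ q.1 - q.2 ∨ q.1 + q.2 + 3 ≤ p.1 - p.2 := by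
  have hinter : extSupport p.1 p.2 ∩ extSupport q.1 q.2 =
      Finset.Icc (max (p.1 - p.2 - 1) (q.1 - q.2 - 1)) (min (p.1 + p.2 + 2) (q.1 + q.2 + 2)) := by
    ext k
    simp only [extSupport, Finset.mem_inter, Finset.mem_Icc]
    omega
  rw [Distant, hinter, Nat.card_Icc]
  omega

lemma Distant.symm {p q : ℕ × ℕ} (h : Distant p q) : Distant q p := by
  rwa [Distant, Finset.inter_comm]

lemma Distant.disjoint {p q : ℕ × ℕ} (hp : p.2 < p.1) (hq : q.2 < q.1) (h : Distant p q) :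
    (sigmaPerm p.1 p.2).Disjoint (sigmaPerm q.1 q.2) := by
  intro k
  rw [sigmaPerm_apply_eq_self_iff hp, sigmaPerm_apply_eq_self_iff hq]
  have := distant_iff.1 h
  omega

lemma pairwise_disjoint_sigmaPerm {n : ℕ} {L : List (ℕ × ℕ)}
    (hL : ∀ p ∈ L, SpecialParams n p.1 p.2) (hd : L.Pairwise Distant) :
    (L.map fun p => sigmaPerm p.1 p.2).Pairwise Perm.Disjoint :=
  List.pairwise_map.2 <| hd.imp_of_mem fun hp hq h =>
    h.disjoint (specialParams_iff.1 (hL _ hp)).1 (specialParams_iff.1 (hL _ hq)).1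

namespace IsKostant

variable {n : ℕ} {w : Perm ℕ}

lemma mono {m : ℕ} (hmn : m ≤ n) (hw : IsKostant m w) : IsKostant n w := by
  obtain ⟨L, hL, hd, rfl⟩ := hw
  refine ⟨L, fun p hp => ?_, hd, rfl⟩
  have := specialParams_iff.1 (hL p hp)
  exact specialParams_iff.2 (by omega)

lemma mem_Icc_of_apply_ne (hw : IsKostant n w) {k : ℕ} (hk : w k ≠ k) : k ∈ Set.Icc 1 n := by
  obtain ⟨L, hL, -, rfl⟩ := hw
  by_contra hout
  refine hk (List.prod_induction (fun σ : Perm ℕ => σ k = k)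
    (fun σ τ hσ hτ => by rw [Perm.mul_apply, hτ, hσ]) rfl ?_)
  simp only [List.mem_map]
  rintro _ ⟨p, hp, rfl⟩
  have := specialParams_iff.1 (hL p hp)
  rw [Set.mem_Icc] at hout
  exact (sigmaPerm_apply_eq_self_iff this.1).2 (by omega)

lemma apply_eq_self (hw : IsKostant n w) {k : ℕ} (hk : n < k) : w k = k := by
  by_contra h
  have := hw.mem_Icc_of_apply_ne h
  grind

end IsKostant

lemma finite_setOf_isKostant (n : ℕ) : {w : Perm ℕ | IsKostant n w}.Finite := by
  refine (Set.finite_range fun f : Perm (Set.Iic n) =>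
    (Perm.subtypeEquivSubtypePerm (· ∈ Set.Iic n) f : Perm ℕ)).subset fun w hw => ?_
  refine ⟨(Perm.subtypeEquivSubtypePerm _).symm ⟨w, fun k hk => hw.apply_eq_self ?_⟩,
    congrArg Subtype.val (Equiv.apply_symm_apply _ _)⟩
  simpa using hk

/-- The special involution `σ_{t-j-1, j}`, whose support is the interval of length `2(j+1)`
ending at `t`. -/
def sigmaTop (t j : ℕ) : Perm ℕ := sigmaPerm (t - j - 1) j

section SigmaTop

variable {t j : ℕ}

lemma sigmaTop_apply_eq_self_iff (h : 2 * j + 2 ≤ t) {k : ℕ} :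
    sigmaTop t j k = k ↔ k + 2 * j + 2 ≤ t ∨ t < k := by
  rw [sigmaTop, sigmaPerm_apply_eq_self_iff (by omega)]
  omega

lemma sigmaTop_apply_top (h : 2 * j + 2 ≤ t) : sigmaTop t j t = t - j - 1 := by
  rw [sigmaTop, sigmaPerm_apply (by omega)]
  split_ifs <;> omega

lemma setOf_sigmaTop_apply_ne (h : 2 * j + 2 ≤ t) :
    {k | sigmaTop t j k ≠ k} = Set.Icc (t - 2 * j - 1) t := by
  ext k
  simp only [Set.mem_ofPred_eq, Set.mem_Icc, ne_eq, sigmaTop_apply_eq_self_iff h]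
  omega

variable {x : Perm ℕ}

lemma isKostant_sigmaTop_mul {n : ℕ} (h : 2 * j + 2 ≤ t) (htn : t ≤ n)
    (hx : IsKostant (t - 2 * j - 3) x) : IsKostant n (sigmaTop t j * x) := by
  obtain ⟨L, hL, hd, rfl⟩ := hx
  refine ⟨(t - j - 1, j) :: L, fun p hp => ?_, List.pairwise_cons.2 ⟨fun q hq => ?_, hd⟩, rfl⟩
  · rcases List.mem_cons.1 hp with rfl | hp
    · exact specialParams_iff.2 (by omega)
    · have := specialParams_iff.1 (hL p hp)
      exact specialParams_iff.2 (by omega)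
  · have := specialParams_iff.1 (hL q hq)
    exact distant_iff.2 (Or.inr (by omega))

lemma sigmaTop_mul_apply_top (h : 2 * j + 2 ≤ t) (hx : IsKostant (t - 2 * j - 3) x) :
    (sigmaTop t j * x) t = t - j - 1 := by
  rw [Perm.mul_apply, hx.apply_eq_self (by omega), sigmaTop_apply_top h]

lemma disjoint_sigmaTop (h : 2 * j + 2 ≤ t) (hx : IsKostant (t - 2 * j - 3) x) :
    (sigmaTop t j).Disjoint x := by
  intro k
  by_cases hk : k + 2 * j + 2 ≤ t
  · exact Or.inl ((sigmaTop_apply_eq_self_iff h).2 (Or.inl hk))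
  · right
    by_contra hxk
    have := hx.mem_Icc_of_apply_ne hxk
    grind

lemma ncard_setOf_sigmaTop_mul_apply_ne (h : 2 * j + 2 ≤ t) (hx : IsKostant (t - 2 * j - 3) x) :
    {k | (sigmaTop t j * x) k ≠ k}.ncard = 2 * (j + 1) + {k | x k ≠ k}.ncard := by
  have hdisj := disjoint_sigmaTop h hx
  have hunion : {k | (sigmaTop t j * x) k ≠ k} = {k | sigmaTop t j k ≠ k} ∪ {k | x k ≠ k} := by
    ext k
    simp only [Set.mem_ofPred_eq, Set.mem_union, ne_eq, hdisj.mul_apply_eq_iff, not_and_or]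
  have hsupp : Disjoint {k | sigmaTop t j k ≠ k} {k | x k ≠ k} :=
    Set.disjoint_left.2 fun k h1 h2 => (hdisj k).elim h1 h2
  have hfin : {k | x k ≠ k}.Finite :=
    (Set.finite_Icc 1 _).subset fun k hk => hx.mem_Icc_of_apply_ne hk
  rw [hunion, Set.ncard_union_eq hsupp (by rw [setOf_sigmaTop_apply_ne h]; exact Set.finite_Icc _ _)
    hfin, setOf_sigmaTop_apply_ne h, Set.ncard_Icc_nat]
  omega

end SigmaTop

namespace IsKostant

variable {t : ℕ} {w : Perm ℕ}

/-- Being distant from the block ending at `t`, every other block ends at least two points below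
the start of that block. -/
lemma pred_or_exists_eq_sigmaTop_mul (hw : IsKostant t w) :
    IsKostant (t - 1) w ∨
      ∃ j x, 2 * j + 2 ≤ t ∧ IsKostant (t - 2 * j - 3) x ∧ w = sigmaTop t j * x := by
  obtain ⟨L, hL, hd, rfl⟩ := hw
  by_cases htop : ∃ p ∈ L, p.1 + p.2 + 1 = t
  · obtain ⟨p, hp, hpt⟩ := htop
    obtain ⟨s, u, rfl⟩ := List.append_of_mem hp
    have hperm : List.Perm (s ++ p :: u) (p :: (s ++ u)) := List.perm_middle
    have hd' := List.pairwise_cons.1 ((hperm.pairwise_iff fun h => h.symm).1 hd)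
    have hpt' := specialParams_iff.1 (hL p hp)
    refine Or.inr ⟨p.2, _, by omega, ⟨s ++ u, fun q hq => ?_, hd'.2, rfl⟩, ?_⟩
    · have hq' := specialParams_iff.1 (hL q (hperm.symm.subset (List.mem_cons_of_mem _ hq)))
      have := distant_iff.1 (hd'.1 q hq)
      exact specialParams_iff.2 (by omega)
    · rw [Perm.disjoint_prod_perm (pairwise_disjoint_sigmaPerm hL hd)
        (hperm.map fun p => sigmaPerm p.1 p.2), List.map_cons, List.prod_cons, sigmaTop,
        show t - p.2 - 1 = p.1 by omega]
  · push Not at htop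
    refine Or.inl ⟨L, fun p hp => ?_, hd, rfl⟩
    have := specialParams_iff.1 (hL p hp)
    exact specialParams_iff.2 (by have := htop p hp; omega)

lemma exists_eq_sigmaTop_mul (hw : IsKostant t w) (ht : w t ≠ t) :
    ∃ j x, 2 * j + 2 ≤ t ∧ IsKostant (t - 2 * j - 3) x ∧ w = sigmaTop t j * x := by
  refine hw.pred_or_exists_eq_sigmaTop_mul.resolve_left fun hw' => ?_
  have := hw'.mem_Icc_of_apply_ne ht
  grind

lemma pred_of_apply_eq (hw : IsKostant t w) (ht : w t = t) : IsKostant (t - 1) w := by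
  refine hw.pred_or_exists_eq_sigmaTop_mul.resolve_right ?_
  rintro ⟨j, x, h, hx, rfl⟩
  have := sigmaTop_mul_apply_top h hx
  omega

end IsKostant

def kostantSet (n a : ℕ) : Set (Perm ℕ) :=
  {w | IsKostant n w ∧ {k | w k ≠ k}.ncard = 2 * a}

lemma ki_eq_ncard (n a : ℕ) : ki n a = (kostantSet n a).ncard := rfl

lemma kostantSet_inter_setOf_apply_eq (t a : ℕ) :
    kostantSet (t + 1) a ∩ {w | w (t + 1) = t + 1} = kostantSet t a := by
  ext w
  simp only [kostantSet, Set.mem_inter_iff, Set.mem_ofPred_eq]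
  refine ⟨fun ⟨⟨hw, hc⟩, ht⟩ => ⟨hw.pred_of_apply_eq ht, hc⟩,
    fun ⟨hw, hc⟩ => ⟨⟨hw.mono (by omega), hc⟩, hw.apply_eq_self (by omega)⟩⟩

/-- Pairs `(j, x)` with `x` a Kostant involution of `S_{m-2j-1}` with `2(a-j)` moved points: such an
`x` fits below a block of width `2(j+1)` ending at `m + 2`, and below one of width `2j` ending at `m`. -/
def blockPairs (m a : ℕ) : Set (ℕ × Perm ℕ) :=
  {p | 2 * p.1 ≤ m ∧ IsKostant (m - 2 * p.1 - 1) p.2 ∧ {k | p.2 k ≠ k}.ncard + 2 * p.1 = 2 * a}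

section BlockPairs

variable {m a : ℕ}

lemma image_blockPairs_eq_diff :
    (fun p => sigmaTop (m + 2) p.1 * p.2) '' blockPairs m a =
      kostantSet (m + 2) (a + 1) \ {w | w (m + 2) = m + 2} := by
  ext w
  simp only [Set.mem_image, blockPairs, kostantSet, Set.mem_sdiff, Set.mem_ofPred_eq, Prod.exists]
  constructor
  · rintro ⟨j, x, ⟨hj, hx, hc⟩, rfl⟩
    rw [show m - 2 * j - 1 = m + 2 - 2 * j - 3 by omega] at hx
    refine ⟨⟨isKostant_sigmaTop_mul (by omega) le_rfl hx, ?_⟩, ?_⟩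
    · rw [ncard_setOf_sigmaTop_mul_apply_ne (by omega) hx]
      omega
    · rw [sigmaTop_mul_apply_top (by omega) hx]
      omega
  · rintro ⟨⟨hw, hc⟩, ht⟩
    obtain ⟨j, x, hj, hx, rfl⟩ := hw.exists_eq_sigmaTop_mul ht
    rw [ncard_setOf_sigmaTop_mul_apply_ne hj hx] at hc
    exact ⟨j, x, ⟨by omega, by rwa [show m - 2 * j - 1 = m + 2 - 2 * j - 3 by omega], by omega⟩,
      rfl⟩

lemma injOn_blockPairs_sigmaTop_mul :
    Set.InjOn (fun p => sigmaTop (m + 2) p.1 * p.2) (blockPairs m a) := by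
  rintro ⟨j₁, x₁⟩ ⟨hj₁, hx₁, -⟩ ⟨j₂, x₂⟩ ⟨hj₂, hx₂, -⟩ h
  dsimp only at h hj₁ hj₂
  rw [show m - 2 * j₁ - 1 = m + 2 - 2 * j₁ - 3 by omega] at hx₁
  rw [show m - 2 * j₂ - 1 = m + 2 - 2 * j₂ - 3 by omega] at hx₂
  have htop := congrArg (· (m + 2)) h
  simp only [sigmaTop_mul_apply_top (by omega) hx₁, sigmaTop_mul_apply_top (by omega) hx₂] at htop
  obtain rfl : j₁ = j₂ := by omega
  exact Prod.ext rfl (mul_left_cancel h)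

/-- `sigmaTop (m + 2) j * x` with its top block cut down to end at `m` (deleted when `j = 0`). -/
def shrinkTop (m : ℕ) (p : ℕ × Perm ℕ) : Perm ℕ :=
  if p.1 = 0 then p.2 else sigmaTop m (p.1 - 1) * p.2

lemma shrinkTop_apply_top {p : ℕ × Perm ℕ} (hp : p ∈ blockPairs m a) :
    shrinkTop m p m = m - p.1 := by
  obtain ⟨hj, hx, -⟩ := hp
  unfold shrinkTop
  split_ifs with h0
  · rw [h0, Nat.sub_zero]
    by_contra hne
    have := hx.mem_Icc_of_apply_ne hne
    grind
  · rw [show m - 2 * p.1 - 1 = m - 2 * (p.1 - 1) - 3 by omega] at hx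
    rw [sigmaTop_mul_apply_top (by omega) hx]
    omega

lemma image_blockPairs_shrinkTop : shrinkTop m '' blockPairs m a = kostantSet m a := by
  ext w
  simp only [Set.mem_image, blockPairs, kostantSet, Set.mem_ofPred_eq, Prod.exists, shrinkTop]
  constructor
  · rintro ⟨j, x, ⟨hj, hx, hc⟩, rfl⟩
    split_ifs with h0
    · subst h0
      exact ⟨hx.mono (by omega), by omega⟩
    · rw [show m - 2 * j - 1 = m - 2 * (j - 1) - 3 by omega] at hx
      refine ⟨isKostant_sigmaTop_mul (by omega) le_rfl hx, ?_⟩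
      rw [ncard_setOf_sigmaTop_mul_apply_ne (by omega) hx]
      omega
  · rintro ⟨hw, hc⟩
    by_cases ht : w m = m
    · exact ⟨0, w, ⟨by omega, by simpa using hw.pred_of_apply_eq ht, by omega⟩, if_pos rfl⟩
    · obtain ⟨j, x, hj, hx, rfl⟩ := hw.exists_eq_sigmaTop_mul ht
      rw [ncard_setOf_sigmaTop_mul_apply_ne hj hx] at hc
      exact ⟨j + 1, x, ⟨by omega, by rwa [show m - 2 * (j + 1) - 1 = m - 2 * j - 3 by omega],
        by omega⟩, by simp⟩

lemma injOn_blockPairs_shrinkTop : Set.InjOn (shrinkTop m) (blockPairs m a) := by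
  rintro ⟨j₁, x₁⟩ hp₁ ⟨j₂, x₂⟩ hp₂ h
  have htop := congrArg (· m) h
  simp only [shrinkTop_apply_top hp₁, shrinkTop_apply_top hp₂] at htop
  obtain rfl : j₁ = j₂ := by have := hp₁.1; have := hp₂.1; dsimp only at *; omega
  refine Prod.ext rfl ?_
  unfold shrinkTop at h
  split_ifs at h
  · exact h
  · exact mul_left_cancel h

end BlockPairs

lemma ncard_kostantSet_diff_setOf_apply_eq (m a : ℕ) :
    (kostantSet (m + 2) (a + 1) \ {w | w (m + 2) = m + 2}).ncard = (kostantSet m a).ncard := by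
  rw [← image_blockPairs_eq_diff, ← image_blockPairs_shrinkTop,
    injOn_blockPairs_sigmaTop_mul.ncard_image, injOn_blockPairs_shrinkTop.ncard_image]

theorem ki_recursion_general (n a : ℕ) (hn : 3 ≤ n) (ha1 : 1 ≤ a) :
    ki n a = ki (n - 1) a + ki (n - 2) (a - 1) := by
  obtain ⟨m, rfl⟩ : ∃ m, n = m + 2 := ⟨n - 2, by omega⟩
  obtain ⟨b, rfl⟩ : ∃ b, a = b + 1 := ⟨a - 1, by omega⟩
  have hfin : (kostantSet (m + 2) (b + 1)).Finite :=
    (finite_setOf_isKostant _).subset fun w hw => hw.1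
  rw [ki_eq_ncard, ← Set.ncard_inter_add_ncard_sdiff_eq_ncard _ {w | w (m + 2) = m + 2} hfin,
    kostantSet_inter_setOf_apply_eq, ncard_kostantSet_diff_setOf_apply_eq]
  rfl

/-- The recursion `ki_n^a = ki_{n-1}^a + ki_{n-2}^{a-1}` for the counts of Kostant
involutions with a given number of transpositions. -/
theorem ki_recursion (n a : ℕ) (hn : 3 ≤ n) (ha1 : 1 ≤ a) (ha2 : a ≤ n / 2) :
    ki n a = ki (n - 1) a + ki (n - 2) (a - 1) :=
  ki_recursion_general n a hn ha1
end

section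
/- Let ki_n be the number of Kostant involutions in S_n and mi_n the number of 321-avoiding involutions in S_n. Then the ratio ki_n / mi_n, viewed as a sequence of real numbers, tends to 0 as n → ∞. -/
/-- The total number of Kostant involutions in `S_n`. -/
noncomputable def kiTotal (n : ℕ) : ℕ :=
  Set.ncard {w : Equiv.Perm ℕ | IsKostant n w}

/-- `w` is a permutation of `{1,…,n}` (i.e. fixes every point outside `{1,…,n}`)
which is an involution: `w² = 1`. -/
def IsInvolutionOn (n : ℕ) (w : Equiv.Perm ℕ) : Prop :=
  (∀ k : ℕ, w k ≠ k → 1 ≤ k ∧ k ≤ n) ∧ w * w = 1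

/-- `w ∈ S_n` is 321-avoiding: there are no indices `1 ≤ p < q < r ≤ n` with
`w(p) > w(q) > w(r)`. -/
def Avoids321 (n : ℕ) (w : Equiv.Perm ℕ) : Prop :=
  ∀ p q r : ℕ, 1 ≤ p → p < q → q < r → r ≤ n → ¬ (w q < w p ∧ w r < w q)

/-- `mi n` is the number of 321-avoiding involutions in `S_n`. -/
noncomputable def mi (n : ℕ) : ℕ :=
  Set.ncard {w : Equiv.Perm ℕ | IsInvolutionOn n w ∧ Avoids321 n w}

open Finset

section IntervalFamilies

def intervalFamilies (M : ℕ) : Finset (Finset (ℕ × ℕ)) :=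
  (range (M + 1) ×ˢ range (M + 1)).powerset.filter fun S =>
    (∀ I ∈ S, I.1 + 3 ≤ I.2) ∧ ∀ I ∈ S, ∀ J ∈ S, I ≠ J → I.2 ≤ J.1 ∨ J.2 ≤ I.1

theorem mem_intervalFamilies {M : ℕ} {S : Finset (ℕ × ℕ)} :
    S ∈ intervalFamilies M ↔ (∀ I ∈ S, I.2 ≤ M) ∧ (∀ I ∈ S, I.1 + 3 ≤ I.2) ∧
      ∀ I ∈ S, ∀ J ∈ S, I ≠ J → I.2 ≤ J.1 ∨ J.2 ≤ I.1 := by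
  simp only [intervalFamilies, mem_filter, mem_powerset]
  refine ⟨fun ⟨h, hlen, hsep⟩ => ⟨fun I hI => ?_, hlen, hsep⟩,
    fun ⟨hle, hlen, hsep⟩ => ⟨fun I hI => ?_, hlen, hsep⟩⟩
  · have := mem_product.1 (h hI); simp only [mem_range] at this; omega
  · have := hle I hI; have := hlen I hI; simp only [mem_product, mem_range]; omega

theorem intervalFamilies_succ_subset (M : ℕ) :
    intervalFamilies (M + 1) ⊆ intervalFamilies M ∪
      (range (M - 1)).biUnion fun a => (intervalFamilies a).image (insert (a, M + 1)) := by
  intro S hS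
  obtain ⟨hle, hlen, hsep⟩ := mem_intervalFamilies.1 hS
  by_cases hlast : ∃ I ∈ S, I.2 = M + 1
  · obtain ⟨I, hI, hI2⟩ := hlast
    have hIa : I.1 + 3 ≤ M + 1 := hI2 ▸ hlen I hI
    refine mem_union_right _ (mem_biUnion.2 ⟨I.1, mem_range.2 (by omega), ?_⟩)
    refine mem_image.2 ⟨S.erase I, mem_intervalFamilies.2 ⟨fun J hJ => ?_, fun J hJ =>
      hlen J (mem_of_mem_erase hJ), fun J hJ K hK => hsep J (mem_of_mem_erase hJ) K
        (mem_of_mem_erase hK)⟩, ?_⟩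
    · have := hsep J (mem_of_mem_erase hJ) I hI (ne_of_mem_erase hJ)
      have := hlen J (mem_of_mem_erase hJ)
      have := hle J (mem_of_mem_erase hJ)
      omega
    · rw [← hI2, insert_erase hI]
  · push Not at hlast
    refine mem_union_left _ (mem_intervalFamilies.2 ⟨fun I hI => ?_, hlen, hsep⟩)
    have := hle I hI; have := hlast I hI; omega

theorem card_intervalFamilies_succ_le (M : ℕ) :
    #(intervalFamilies (M + 1)) ≤
      #(intervalFamilies M) + ∑ a ∈ range (M - 1), #(intervalFamilies a) :=
  calc #(intervalFamilies (M + 1))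
      ≤ #(intervalFamilies M ∪ (range (M - 1)).biUnion
          fun a => (intervalFamilies a).image (insert (a, M + 1))) :=
        card_le_card (intervalFamilies_succ_subset M)
    _ ≤ #(intervalFamilies M) + ∑ a ∈ range (M - 1),
          #((intervalFamilies a).image (insert (a, M + 1))) :=
        (card_union_le _ _).trans (Nat.add_le_add_left card_biUnion_le _)
    _ ≤ _ := Nat.add_le_add_left (sum_le_sum fun _ _ => card_image_le) _

theorem sum_range_nine_fifths_pow_le (k : ℕ) :
    ∑ a ∈ range k, (9 / 5 : ℝ) ^ a ≤ 5 / 4 * (9 / 5) ^ k := by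
  induction k with
  | zero => norm_num
  | succ k ih => rw [sum_range_succ, pow_succ]; linarith

/-- `9/5` works because `r² ≥ r + 1/(r - 1)` at `r = 9/5`. -/
theorem le_nine_fifths_pow_of_le_add_sum {f : ℕ → ℝ} (h0 : f 0 ≤ 1)
    (hrec : ∀ M, f (M + 1) ≤ f M + ∑ a ∈ range (M - 1), f a) (M : ℕ) :
    f M ≤ (9 / 5) ^ M := by
  induction M using Nat.strong_induction_on with
  | _ M ih =>
    rcases M with _ | M
    · simpa using h0
    refine (hrec M).trans ?_
    have hsum : ∑ a ∈ range (M - 1), f a ≤ ∑ a ∈ range (M - 1), (9 / 5 : ℝ) ^ a :=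
      sum_le_sum fun a ha => ih a (by simp at ha; omega)
    have hM := ih M (by omega)
    rcases M with _ | M
    · norm_num at hsum ⊢; linarith
    · simp only [Nat.add_sub_cancel] at hsum ⊢
      have hpos := pow_pos (show (0 : ℝ) < 9 / 5 by norm_num) M
      calc f (M + 1) + ∑ a ∈ range M, f a
          ≤ (9 / 5) ^ (M + 1) + 5 / 4 * (9 / 5) ^ M :=
            add_le_add hM (hsum.trans (sum_range_nine_fifths_pow_le M))
        _ ≤ (9 / 5) ^ (M + 1 + 1) := by
            have h1 : (9 / 5 : ℝ) ^ (M + 1) = 9 / 5 * (9 / 5) ^ M := by ring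
            have h2 : (9 / 5 : ℝ) ^ (M + 1 + 1) = 81 / 25 * (9 / 5) ^ M := by ring
            rw [h1, h2]; linarith

theorem card_intervalFamilies_le (M : ℕ) : (#(intervalFamilies M) : ℝ) ≤ (9 / 5) ^ M := by
  refine le_nine_fifths_pow_of_le_add_sum (f := fun M => (#(intervalFamilies M) : ℝ))
    ?_ (fun M => ?_) M
  · have : intervalFamilies 0 ⊆ {∅} := fun S hS => by
      obtain ⟨hle, hlen, -⟩ := mem_intervalFamilies.1 hS
      exact mem_singleton.2 (eq_empty_of_forall_notMem fun I hI => by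
        have := hle I hI; have := hlen I hI; omega)
    exact_mod_cast (card_le_card this).trans (card_singleton _).le
  · exact_mod_cast card_intervalFamilies_succ_le M

end IntervalFamilies

section Kostant

theorem sigmaPerm_apply_of_lt_or_lt {i j x : ℕ} (h : x < i - j ∨ i + j + 1 < x) :
    sigmaPerm i j x = x := by
  refine List.prod_induction (fun σ : Equiv.Perm ℕ => σ x = x)
    (fun σ τ hσ hτ => by rw [Equiv.Perm.mul_apply, hτ, hσ]) rfl ?_
  simp only [List.mem_map, List.mem_range]
  rintro _ ⟨t, ht, rfl⟩
  exact Equiv.swap_apply_of_ne_of_ne (by omega) (by omega)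

theorem SpecialParams.bounds {n i j : ℕ} (h : SpecialParams n i j) :
    j + 1 ≤ i ∧ i + j + 1 ≤ n := by
  obtain ⟨h1, h2, h3⟩ := h
  rw [le_min_iff] at h3
  omega

def extSupportEnds (p : ℕ × ℕ) : ℕ × ℕ := (p.1 - p.2 - 1, p.1 + p.2 + 2)

theorem Distant.ends_le_or_le {n : ℕ} {p q : ℕ × ℕ} (hp : SpecialParams n p.1 p.2)
    (hq : SpecialParams n q.1 q.2) (h : Distant p q) :
    (extSupportEnds p).2 ≤ (extSupportEnds q).1 ∨ (extSupportEnds q).2 ≤ (extSupportEnds p).1 := by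
  have hinter : extSupport p.1 p.2 ∩ extSupport q.1 q.2 =
      Icc (max (p.1 - p.2 - 1) (q.1 - q.2 - 1)) (min (p.1 + p.2 + 2) (q.1 + q.2 + 2)) := by
    ext x
    simp only [extSupport, mem_inter, mem_Icc]
    omega
  rw [Distant, hinter, Nat.card_Icc] at h
  have := hp.bounds
  have := hq.bounds
  simp only [extSupportEnds]
  omega

theorem Distant.commute {n : ℕ} {p q : ℕ × ℕ} (hp : SpecialParams n p.1 p.2)
    (hq : SpecialParams n q.1 q.2) (h : Distant p q) :
    Commute (sigmaPerm p.1 p.2) (sigmaPerm q.1 q.2) := by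
  refine Equiv.Perm.Disjoint.commute fun x => ?_
  by_cases hx : x < p.1 - p.2 ∨ p.1 + p.2 + 1 < x
  · exact Or.inl (sigmaPerm_apply_of_lt_or_lt hx)
  · have := h.ends_le_or_le hp hq
    simp only [extSupportEnds] at this
    exact Or.inr (sigmaPerm_apply_of_lt_or_lt (by omega))

instance : Std.Symm Distant :=
  ⟨fun p q h => by rwa [Distant, inter_comm]⟩

/-- The special involution whose extended support is `[I.1, I.2]`. -/
def sigmaOfExtSupport (I : ℕ × ℕ) : Equiv.Perm ℕ :=
  sigmaPerm ((I.1 + I.2 - 1) / 2) ((I.2 - I.1 - 3) / 2)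

theorem sigmaOfExtSupport_extSupportEnds {n : ℕ} {p : ℕ × ℕ} (hp : SpecialParams n p.1 p.2) :
    sigmaOfExtSupport (extSupportEnds p) = sigmaPerm p.1 p.2 := by
  have := hp.bounds
  simp only [sigmaOfExtSupport, extSupportEnds]
  congr 1 <;> omega

noncomputable def kostantOfIntervals (S : Finset (ℕ × ℕ)) : Equiv.Perm ℕ :=
  (S.toList.map sigmaOfExtSupport).prod

theorem IsKostant.exists_mem_intervalFamilies {n : ℕ} {w : Equiv.Perm ℕ} (hw : IsKostant n w) :
    ∃ S ∈ intervalFamilies (n + 1), kostantOfIntervals S = w := by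
  classical
  obtain ⟨L, hL, hdist, rfl⟩ := hw
  have hnodup : (L.map extSupportEnds).Nodup :=
    List.pairwise_map.2 <| hdist.imp_of_mem fun hp hq h heq => by
      have hsep := h.ends_le_or_le (hL _ hp) (hL _ hq)
      rw [heq] at hsep
      have := (hL _ hq).bounds
      simp only [extSupportEnds] at hsep
      omega
  have hmap : (L.map extSupportEnds).map sigmaOfExtSupport = L.map fun p => sigmaPerm p.1 p.2 := by
    rw [List.map_map]
    exact List.map_congr_left fun p hp => sigmaOfExtSupport_extSupportEnds (hL p hp)
  have hcomm : (L.map fun p => sigmaPerm p.1 p.2).Pairwise Commute :=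
    List.pairwise_map.2 <| hdist.imp_of_mem fun hp hq h => h.commute (hL _ hp) (hL _ hq)
  have hends : ∀ I ∈ (L.map extSupportEnds).toFinset, I.2 ≤ n + 1 ∧ I.1 + 3 ≤ I.2 := by
    simp only [List.mem_toFinset, List.mem_map]
    rintro _ ⟨p, hp, rfl⟩
    have := (hL p hp).bounds
    simp only [extSupportEnds]
    omega
  refine ⟨(L.map extSupportEnds).toFinset, mem_intervalFamilies.2
    ⟨fun I hI => (hends I hI).1, fun I hI => (hends I hI).2, ?_⟩, ?_⟩
  · simp only [List.mem_toFinset, List.mem_map]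
    rintro _ ⟨p, hp, rfl⟩ _ ⟨q, hq, rfl⟩ hne
    exact (hdist.forall hp hq (by rintro rfl; exact hne rfl)).ends_le_or_le (hL p hp) (hL q hq)
  · rw [kostantOfIntervals, ← hmap]
    rw [← hmap] at hcomm
    exact (((List.toFinset_toList hnodup).map _).symm.prod_eq' hcomm).symm

theorem kiTotal_le_card_intervalFamilies (n : ℕ) : kiTotal n ≤ #(intervalFamilies (n + 1)) := by
  classical
  calc kiTotal n ≤ ((intervalFamilies (n + 1)).image kostantOfIntervals :
        Set (Equiv.Perm ℕ)).ncard := by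
        refine Set.ncard_le_ncard (fun w hw => ?_) (Finset.finite_toSet _)
        obtain ⟨S, hS, rfl⟩ := IsKostant.exists_mem_intervalFamilies hw
        exact mem_coe.2 (mem_image_of_mem _ hS)
    _ = #((intervalFamilies (n + 1)).image kostantOfIntervals) := Set.ncard_coe_finset _
    _ ≤ #(intervalFamilies (n + 1)) := card_image_le

end Kostant

section BallotMatching

open Nat

theorem Nat.lt_card_of_lt_count {p : ℕ → Prop} [DecidablePred p] {k n : ℕ} (h : k < count p n) :
    ∀ hf : (Set.ofPred p).Finite, k < #hf.toFinset :=
  fun hf => h.trans_le (count_le_card hf n)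

structure IsBallotPair (P Q : ℕ → Prop) [DecidablePred P] [DecidablePred Q] (N : ℕ) : Prop where
  not_right_of_left : ∀ x, P x → ¬ Q x
  lt_of_left : ∀ x, P x → x < N
  lt_of_right : ∀ x, Q x → x < N
  count_right_le_count_left : ∀ t, count Q t ≤ count P t
  count_left_eq_count_right : count P N = count Q N

/-- Swaps the `i`-th point of `P` with the `i`-th point of `Q`. -/
noncomputable def ballotMatch (P Q : ℕ → Prop) [DecidablePred P] [DecidablePred Q] (x : ℕ) : ℕ :=
  if P x then nth Q (count P x) else if Q x then nth P (count Q x) else x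

variable {P Q : ℕ → Prop} [DecidablePred P] [DecidablePred Q] {N x y : ℕ}

theorem ballotMatch_of_left (hP : P x) : ballotMatch P Q x = nth Q (count P x) :=
  if_pos hP

theorem ballotMatch_of_right (hP : ¬ P x) (hQ : Q x) : ballotMatch P Q x = nth P (count Q x) := by
  rw [ballotMatch, if_neg hP, if_pos hQ]

theorem ballotMatch_of_not (hP : ¬ P x) (hQ : ¬ Q x) : ballotMatch P Q x = x := by
  simp [ballotMatch, hP, hQ]

namespace IsBallotPair

theorem count_left_lt (h : IsBallotPair P Q N) (hx : P x) : count P x < count Q N :=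
  h.count_left_eq_count_right ▸ count_strict_mono hx (h.lt_of_left x hx)

theorem count_right_lt (h : IsBallotPair P Q N) (hx : Q x) : count Q x < count P N :=
  h.count_left_eq_count_right ▸ count_strict_mono hx (h.lt_of_right x hx)

theorem lt_ballotMatch (h : IsBallotPair P Q N) (hx : P x) : x < ballotMatch P Q x := by
  have hi := lt_card_of_lt_count (h.count_left_lt hx)
  have hQ : Q (nth Q (count P x)) := nth_mem _ hi
  -- up to and including the `i`-th point of `Q` (`i = count P x`) there are `i + 1` points of `Q`,
  -- hence at least `i + 1` points of `P`, none of them at that point itself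
  have hlt : count P x < count P (nth Q (count P x)) := by
    have hball := h.count_right_le_count_left (nth Q (count P x) + 1)
    rw [count_succ, count_succ, if_pos hQ, if_neg fun hP => h.not_right_of_left _ hP hQ,
      count_nth hi] at hball
    omega
  rw [ballotMatch_of_left hx]
  calc x = nth P (count P x) := (nth_count hx).symm
    _ < nth Q (count P x) := nth_lt_of_lt_count hlt

theorem ballotMatch_lt (h : IsBallotPair P Q N) (hx : Q x) : ballotMatch P Q x < x := by
  have hPx : ¬ P x := fun hP => h.not_right_of_left x hP hx
  have hlt : count Q x < count P x := by
    have hball := h.count_right_le_count_left (x + 1)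
    rw [count_succ, count_succ, if_pos hx, if_neg hPx] at hball
    omega
  rw [ballotMatch_of_right hPx hx]
  exact nth_lt_of_lt_count hlt

theorem lt_ballotMatch_iff (h : IsBallotPair P Q N) : x < ballotMatch P Q x ↔ P x := by
  refine ⟨fun hlt => ?_, h.lt_ballotMatch⟩
  by_contra hP
  by_cases hQ : Q x
  · exact lt_asymm hlt (h.ballotMatch_lt hQ)
  · rw [ballotMatch_of_not hP hQ] at hlt
    exact lt_irrefl x hlt

theorem ballotMatch_lt_iff (h : IsBallotPair P Q N) : ballotMatch P Q x < x ↔ Q x := by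
  refine ⟨fun hlt => ?_, h.ballotMatch_lt⟩
  by_contra hQ
  by_cases hP : P x
  · exact lt_asymm hlt (h.lt_ballotMatch hP)
  · rw [ballotMatch_of_not hP hQ] at hlt
    exact lt_irrefl x hlt

theorem ballotMatch_involutive (h : IsBallotPair P Q N) : Function.Involutive (ballotMatch P Q) := by
  intro x
  by_cases hP : P x
  · have hi := lt_card_of_lt_count (h.count_left_lt hP)
    have hQ := nth_mem _ hi
    rw [ballotMatch_of_left hP, ballotMatch_of_right (fun hP' => h.not_right_of_left _ hP' hQ) hQ,
      count_nth hi, nth_count hP]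
  by_cases hQ : Q x
  · have hi := lt_card_of_lt_count (h.count_right_lt hQ)
    have hP' := nth_mem _ hi
    rw [ballotMatch_of_right hP hQ, ballotMatch_of_left hP', count_nth hi, nth_count hQ]
  · rw [ballotMatch_of_not hP hQ, ballotMatch_of_not hP hQ]

theorem ballotMatch_lt_ballotMatch_of_left (h : IsBallotPair P Q N) (hx : P x) (hy : P y)
    (hxy : x < y) : ballotMatch P Q x < ballotMatch P Q y := by
  rw [ballotMatch_of_left hx, ballotMatch_of_left hy]
  exact nth_lt_nth' (count_strict_mono hx hxy) (lt_card_of_lt_count (h.count_left_lt hy))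

theorem ballotMatch_lt_ballotMatch_of_right (h : IsBallotPair P Q N) (hx : Q x) (hy : Q y)
    (hxy : x < y) : ballotMatch P Q x < ballotMatch P Q y := by
  rw [ballotMatch_of_right (fun hP => h.not_right_of_left x hP hx) hx,
    ballotMatch_of_right (fun hP => h.not_right_of_left y hP hy) hy]
  exact nth_lt_nth' (count_strict_mono hx hxy) (lt_card_of_lt_count (h.count_right_lt hy))

theorem not_ballotMatch_decreasing (h : IsBallotPair P Q N)
    (hcover : ∀ x, 0 < x → x < N → P x ∨ Q x) {p q r : ℕ} (hp : 0 < p) (hpq : p < q)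
    (hqr : q < r) : ¬ (ballotMatch P Q q < ballotMatch P Q p ∧
      ballotMatch P Q r < ballotMatch P Q q) := by
  rintro ⟨hqp, hrq⟩
  by_cases hPq : P q
  · have := h.lt_ballotMatch hPq
    by_cases hPp : P p
    · exact lt_asymm hqp (h.ballotMatch_lt_ballotMatch_of_left hPp hPq hpq)
    · have := not_lt.1 (mt h.lt_ballotMatch_iff.1 hPp)
      omega
  by_cases hQq : Q q
  · have := h.ballotMatch_lt hQq
    by_cases hQr : Q r
    · exact lt_asymm hrq (h.ballotMatch_lt_ballotMatch_of_right hQq hQr hqr)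
    · have := not_lt.1 (mt h.ballotMatch_lt_iff.1 hQr)
      omega
  · have hNq : N ≤ q := by
      by_contra hq
      exact (hcover q (by omega) (by omega)).elim hPq hQq
    have hPr : ¬ P r := fun hPr => by have := h.lt_of_left r hPr; omega
    have hQr : ¬ Q r := fun hQr => by have := h.lt_of_right r hQr; omega
    rw [ballotMatch_of_not hPq hQq, ballotMatch_of_not hPr hQr] at hrq
    omega

end IsBallotPair

end BallotMatching

section DyckInvolution

open Nat DyckStep

/-- Positions are counted from `1`, like the points permuted by `S_n`. -/
def DyckWord.IsStepAt (p : DyckWord) (s : DyckStep) (x : ℕ) : Prop :=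
  0 < x ∧ p.toList[x - 1]? = some s

instance (p : DyckWord) (s : DyckStep) : DecidablePred (p.IsStepAt s) :=
  fun _ => instDecidableAnd

namespace DyckWord

variable (p : DyckWord)

theorem count_isStepAt_succ (s : DyckStep) (k : ℕ) :
    count (p.IsStepAt s) (k + 1) = (p.toList.take k).count s := by
  induction k with
  | zero => simp [count_succ, IsStepAt]
  | succ k ih =>
    rw [count_succ, ih, List.take_add_one, List.count_append]
    rcases h : p.toList[k]? with _ | t <;> simp [IsStepAt, h, List.count_singleton]

theorem lt_of_isStepAt {p : DyckWord} {s : DyckStep} {x : ℕ} (h : p.IsStepAt s x) :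
    x < 2 * p.semilength + 1 := by
  have := (List.getElem?_eq_some_iff.1 h.2).1
  rw [two_mul_semilength_eq_length]
  omega

theorem isBallotPair_isStepAt :
    IsBallotPair (p.IsStepAt U) (p.IsStepAt D) (2 * p.semilength + 1) where
  not_right_of_left x hU hD := by simp [IsStepAt, hU.2] at hD
  lt_of_left _ := lt_of_isStepAt
  lt_of_right _ := lt_of_isStepAt
  count_right_le_count_left
    | 0 => by simp
    | k + 1 => by rw [count_isStepAt_succ, count_isStepAt_succ]; exact p.count_D_le_count_U k
  count_left_eq_count_right := by
    rw [count_isStepAt_succ, count_isStepAt_succ, two_mul_semilength_eq_length, List.take_length,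
      count_U_eq_count_D]

theorem isStepAt_or_isStepAt {x : ℕ} (hx : 0 < x) (hxN : x < 2 * p.semilength + 1) :
    p.IsStepAt U x ∨ p.IsStepAt D x := by
  rw [two_mul_semilength_eq_length] at hxN
  rcases (p.toList[x - 1]'(by omega)).dichotomy with h | h
  · exact Or.inl ⟨hx, by rw [List.getElem?_eq_getElem (by omega), h]⟩
  · exact Or.inr ⟨hx, by rw [List.getElem?_eq_getElem (by omega), h]⟩

noncomputable def involution : Equiv.Perm ℕ :=
  p.isBallotPair_isStepAt.ballotMatch_involutive.toPerm

theorem involution_apply (x : ℕ) :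
    p.involution x = ballotMatch (p.IsStepAt U) (p.IsStepAt D) x := rfl

theorem isInvolutionOn_involution {n : ℕ} (hn : 2 * p.semilength ≤ n) :
    IsInvolutionOn n p.involution := by
  refine ⟨fun k hk => ?_, Equiv.ext p.isBallotPair_isStepAt.ballotMatch_involutive⟩
  rw [involution_apply] at hk
  by_cases hU : p.IsStepAt U k
  · have := lt_of_isStepAt hU; exact ⟨hU.1, by omega⟩
  by_cases hD : p.IsStepAt D k
  · have := lt_of_isStepAt hD; exact ⟨hD.1, by omega⟩
  exact absurd (ballotMatch_of_not hU hD) hk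

theorem avoids321_involution (n : ℕ) : Avoids321 n p.involution := fun _ _ _ hp hpq hqr _ =>
  p.isBallotPair_isStepAt.not_ballotMatch_decreasing (fun _ => p.isStepAt_or_isStepAt) hp hpq hqr

theorem involution_injective : Function.Injective involution := by
  intro p q hpq
  have hstep : ∀ s x, p.IsStepAt s x ↔ q.IsStepAt s x := by
    intro s x
    rcases s.dichotomy with rfl | rfl
    · rw [← p.isBallotPair_isStepAt.lt_ballotMatch_iff, ← q.isBallotPair_isStepAt.lt_ballotMatch_iff,
        ← involution_apply, ← involution_apply, hpq]
    · rw [← p.isBallotPair_isStepAt.ballotMatch_lt_iff, ← q.isBallotPair_isStepAt.ballotMatch_lt_iff,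
        ← involution_apply, ← involution_apply, hpq]
  refine DyckWord.ext (List.ext_getElem? fun k => Option.ext fun s => ?_)
  simpa [IsStepAt] using hstep s (k + 1)

end DyckWord

theorem finite_setOf_perm_forall_ne_imp_mem {α : Type*} [DecidableEq α] (s : Finset α) :
    {w : Equiv.Perm α | ∀ x, w x ≠ x → x ∈ s}.Finite := by
  refine (Set.finite_range fun σ : Equiv.Perm s => Equiv.Perm.ofSubtype σ).subset fun w hw =>
    ⟨w.subtypePerm fun x => ?_, Equiv.Perm.ofSubtype_subtypePerm _ hw⟩
  by_cases hx : w x = x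
  · rw [hx]
  · exact iff_of_true (hw _ fun h => hx (w.injective h)) (hw x hx)

theorem catalan_le_mi {n m : ℕ} (hm : 2 * m ≤ n) : catalan m ≤ mi n := by
  set S := {w : Equiv.Perm ℕ | IsInvolutionOn n w ∧ Avoids321 n w}
  have hfin : S.Finite := (finite_setOf_perm_forall_ne_imp_mem (Finset.Icc 1 n)).subset
    fun w hw k hk => Finset.mem_Icc.2 (hw.1.1 k hk)
  have := hfin.to_subtype
  let f : {p : DyckWord // p.semilength = m} → S := fun p =>
    ⟨p.1.involution, p.1.isInvolutionOn_involution (by rw [p.2]; exact hm), p.1.avoids321_involution n⟩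
  have hf : Function.Injective f := fun p q h =>
    Subtype.ext (DyckWord.involution_injective (congrArg Subtype.val h))
  rw [← DyckWord.card_dyckWord_semilength_eq_catalan, ← Nat.card_eq_fintype_card, mi,
    ← Nat.card_coe_set_eq]
  exact Nat.card_le_card_of_injective f hf

theorem two_pow_le_sq_mul_catalan (n : ℕ) : 2 ^ n ≤ (n + 1) ^ 2 * catalan (n / 2) := by
  rcases Nat.eq_zero_or_pos (n / 2) with hm | hm
  · have : n ≤ 1 := by omega
    interval_cases n <;> simp
  have hcentral := Nat.four_pow_le_two_mul_self_mul_centralBinom _ hm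
  rw [← succ_mul_catalan_eq_centralBinom] at hcentral
  calc 2 ^ n ≤ 2 * 4 ^ (n / 2) := by
        rw [show 4 = 2 ^ 2 by rfl, ← pow_mul, ← pow_succ']
        exact Nat.pow_le_pow_right (by norm_num) (by omega)
    _ ≤ 2 * (2 * (n / 2) * ((n / 2 + 1) * catalan (n / 2))) := by gcongr
    _ = (2 * (n / 2)) * (2 * (n / 2) + 2) * catalan (n / 2) := by ring
    _ ≤ (n + 1) ^ 2 * catalan (n / 2) := by
        gcongr
        have : 2 * (n / 2) ≤ n := Nat.mul_div_le n 2
        nlinarith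

end DyckInvolution

theorem ki_div_mi_le (n : ℕ) :
    (kiTotal n : ℝ) / mi n ≤ 2 * (((n + 1 : ℕ) : ℝ) ^ 2 * (9 / 10) ^ (n + 1)) := by
  have hki : (kiTotal n : ℝ) ≤ (9 / 5) ^ (n + 1) :=
    (Nat.cast_le.2 (kiTotal_le_card_intervalFamilies n)).trans (card_intervalFamilies_le _)
  have hmi : (2 : ℝ) ^ n ≤ ((n + 1 : ℕ) : ℝ) ^ 2 * mi n := by
    exact_mod_cast (two_pow_le_sq_mul_catalan n).trans
      (Nat.mul_le_mul_left _ (catalan_le_mi (Nat.mul_div_le n 2)))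
  have hmi_pos : (0 : ℝ) < mi n := by
    by_contra! h
    nlinarith [pow_pos (show (0 : ℝ) < 2 by norm_num) n, sq_nonneg ((n + 1 : ℕ) : ℝ)]
  rw [div_le_iff₀ hmi_pos]
  calc (kiTotal n : ℝ) ≤ (9 / 5) ^ (n + 1) := hki
    _ = 2 * (9 / 10) ^ (n + 1) * 2 ^ n := by
        rw [show (9 / 5 : ℝ) = 9 / 10 * 2 by norm_num, mul_pow]
        ring
    _ ≤ 2 * (9 / 10) ^ (n + 1) * (((n + 1 : ℕ) : ℝ) ^ 2 * mi n) := by gcongr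
    _ = _ := by ring

/-- The proportion of Kostant involutions among all 321-avoiding involutions in `S_n`
tends to `0` as `n → ∞`. -/
theorem ki_div_mi_tendsto_zero :
    Filter.Tendsto (fun n : ℕ => (kiTotal n : ℝ) / (mi n : ℝ))
      Filter.atTop (nhds 0) := by
  have hbound : Filter.Tendsto (fun n : ℕ => 2 * (((n + 1 : ℕ) : ℝ) ^ 2 * (9 / 10) ^ (n + 1)))
      Filter.atTop (nhds 0) := by
    simpa using ((Filter.tendsto_add_atTop_iff_nat 1).2
      (tendsto_pow_const_mul_const_pow_of_abs_lt_one 2 (r := 9 / 10) (by norm_num))).const_mul 2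
  exact squeeze_zero (fun n => by positivity) ki_div_mi_le hbound
end
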